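/- arXiv:2001.00343 — 2 statements merged into one kernel-verified Lean document; each statement's English description precedes it below -/
import Mathlib

section
/- If holomorphic functions E2, E4, E6 on a domain satisfy the Ramanujan identities E2' = (E2^2 - E4)/12, E4' = (E2·E4 - E6)/3, and E6' = (E2·E6 - E4^2)/2 (with respect to a fixed derivation), then E2 satisfies the Chazy equation 2·E2''' - 2·E2·E2'' + 3·(E2')^2 = 0. -/
/-!
Clearing denominators, the Ramanujan identities express `E2'`, `E2''` and `E2'''` as
polynomials in `E2, E4, E6`:
`72 E2'' = E2³ - 3 E2 E4 + 2 E6` and `288 E2''' = E2⁴ - 6 E2² E4 + 8 E2 E6 - 3 E4²`.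
Substituting these into `144 (2 E2''' - 2 E2 E2'' + 3 E2'²)` every monomial cancels, and
`144` can be cancelled since a `ℚ`-algebra has no additive torsion.
-/

theorem eq_one_div_ofNat_smul_iff_nsmul_eq {M : Type*} [AddCommGroup M] [Module ℚ M]
    (n : ℕ) [n.AtLeastTwo] {x y : M} : y = (1 / ofNat(n) : ℚ) • x ↔ ofNat(n) • y = x := by
  rw [one_div, eq_inv_smul_iff₀ (OfNat.ofNat_ne_zero n), ofNat_smul_eq_nsmul]

theorem Derivation.map_ofNat {A R : Type*} [CommRing A] [CommRing R] [Algebra A R]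
    (D : Derivation A R R) (n : ℕ) [n.AtLeastTwo] : D (ofNat(n) : R) = 0 := by
  rw [← Nat.cast_ofNat]
  exact D.map_natCast n

structure RamanujanSystem {A R : Type*} [CommRing A] [CommRing R] [Algebra A R]
    (D : Derivation A R R) (E2 E4 E6 : R) : Prop where
  nsmul_deriv_E2 : 12 • D E2 = E2 ^ 2 - E4
  nsmul_deriv_E4 : 3 • D E4 = E2 * E4 - E6
  nsmul_deriv_E6 : 2 • D E6 = E2 * E6 - E4 ^ 2

namespace RamanujanSystem

variable {A R : Type*} [CommRing A] [CommRing R] [Algebra A R]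
  {D : Derivation A R R} {E2 E4 E6 : R}

theorem of_rat_smul [Algebra ℚ R] (h2 : D E2 = (1 / 12 : ℚ) • (E2 ^ 2 - E4))
    (h4 : D E4 = (1 / 3 : ℚ) • (E2 * E4 - E6)) (h6 : D E6 = (1 / 2 : ℚ) • (E2 * E6 - E4 ^ 2)) :
    RamanujanSystem D E2 E4 E6 where
  nsmul_deriv_E2 := (eq_one_div_ofNat_smul_iff_nsmul_eq 12).mp h2
  nsmul_deriv_E4 := (eq_one_div_ofNat_smul_iff_nsmul_eq 3).mp h4
  nsmul_deriv_E6 := (eq_one_div_ofNat_smul_iff_nsmul_eq 2).mp h6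

theorem nsmul_deriv_deriv_E2 (h : RamanujanSystem D E2 E4 E6) :
    72 • D (D E2) = E2 ^ 3 - 3 * E2 * E4 + 2 * E6 := by
  have d2 := congrArg D h.nsmul_deriv_E2
  rw [map_nsmul, map_sub, Derivation.leibniz_pow, smul_eq_mul] at d2
  linear_combination 6 * d2 + E2 * h.nsmul_deriv_E2 - 2 * h.nsmul_deriv_E4

theorem nsmul_deriv_deriv_deriv_E2 (h : RamanujanSystem D E2 E4 E6) :
    288 • D (D (D E2)) = E2 ^ 4 - 6 * E2 ^ 2 * E4 + 8 * E2 * E6 - 3 * E4 ^ 2 := by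
  have d3 := congrArg D h.nsmul_deriv_deriv_E2
  simp only [map_nsmul, map_add, map_sub, Derivation.leibniz, Derivation.leibniz_pow,
    Derivation.map_ofNat, smul_eq_mul] at d3
  linear_combination 4 * d3 + (E2 ^ 2 - E4) * h.nsmul_deriv_E2 - 4 * E2 * h.nsmul_deriv_E4
    + 4 * h.nsmul_deriv_E6

theorem chazy [IsAddTorsionFree R] (h : RamanujanSystem D E2 E4 E6) :
    2 * D (D (D E2)) - 2 * E2 * D (D E2) + 3 * D E2 ^ 2 = 0 := by
  refine nsmul_right_injective (M := R) (show 144 ≠ 0 by norm_num) ?_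
  simp only [smul_zero]
  linear_combination h.nsmul_deriv_deriv_deriv_E2 - 4 * E2 * h.nsmul_deriv_deriv_E2
    + 3 * (12 • D E2 + E2 ^ 2 - E4) * h.nsmul_deriv_E2

end RamanujanSystem

/-- **Ramanujan identities imply the Chazy equation.**
If `E2, E4, E6` in a commutative `ℚ`-algebra satisfy the Ramanujan identities
with respect to a derivation `D`, then `E2` satisfies the Chazy equation
`2·E2''' − 2·E2·E2'' + 3·(E2')² = 0`. -/
theorem ramanujan_implies_chazy {R : Type*} [CommRing R] [Algebra ℚ R]
    (D : Derivation ℚ R R) (E2 E4 E6 : R)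
    (h2 : D E2 = (1/12 : ℚ) • (E2 ^ 2 - E4))
    (h4 : D E4 = (1/3 : ℚ) • (E2 * E4 - E6))
    (h6 : D E6 = (1/2 : ℚ) • (E2 * E6 - E4 ^ 2)) :
    2 * D (D (D E2)) - 2 * E2 * D (D E2) + 3 * (D E2) ^ 2 = 0 := by
  have : IsAddTorsionFree R := .of_module_rat R
  exact (RamanujanSystem.of_rat_smul h2 h4 h6).chazy
end

section
/- The series E2(q) = 1 − 24·Σ_{n≥1} σ₁(n)·q^n satisfies the Chazy equation 2θ³E2 − 2E2·θ²E2 + 3(θE2)² = 0 with θ = q·d/dq, where σ₁(n) = Σ_{d|n} d. -/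
open PowerSeries

/-- The derivation `θ = q·d/dq` on formal power series. -/
noncomputable def theta (f : PowerSeries ℂ) : PowerSeries ℂ :=
  PowerSeries.mk fun n => (n : ℂ) * PowerSeries.coeff n f

/-- The weight-two Eisenstein series `E₂(q) = 1 − 24·Σ_{n≥1} σ₁(n)·qⁿ`,
as a formal power series in `q`, where `σ₁(n) = Σ_{d∣n} d`. -/
noncomputable def E2 : PowerSeries ℂ :=
  PowerSeries.mk fun n =>
    if n = 0 then 1 else -24 * ∑ d ∈ n.divisors, (d : ℂ)

open Finset

def Qs (n : ℕ) : Finset (ℕ × ℕ × ℕ × ℕ) :=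
  ((range (n+1)) ×ˢ (range (n+1)) ×ˢ (range (n+1)) ×ˢ (range (n+1))).filter
    fun q => q.1 * q.2.2.1 + q.2.1 * q.2.2.2 = n ∧
      0 < q.1 ∧ 0 < q.2.1 ∧ 0 < q.2.2.1 ∧ 0 < q.2.2.2

lemma mem_Qs {n a b x y : ℕ} :
    (a, b, x, y) ∈ Qs n ↔ a * x + b * y = n ∧ 0 < a ∧ 0 < b ∧ 0 < x ∧ 0 < y := by
  simp only [Qs, mem_filter, mem_product, mem_range]
  constructor
  · rintro ⟨-, h⟩; exact h
  · rintro ⟨h, ha, hb, hx, hy⟩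
    have h1 : a ≤ a * x := Nat.le_mul_of_pos_right a hx
    have h2 : b ≤ b * y := Nat.le_mul_of_pos_right b hy
    have h3 : x ≤ a * x := Nat.le_mul_of_pos_left x ha
    have h4 : y ≤ b * y := Nat.le_mul_of_pos_left y hb
    exact ⟨⟨by omega, by omega, by omega, by omega⟩, h, ha, hb, hx, hy⟩

def QA (n : ℕ) : Finset (ℕ × ℕ × ℕ × ℕ) := (Qs n).filter fun q => q.2.1 < q.1
def QX (n : ℕ) : Finset (ℕ × ℕ × ℕ × ℕ) := (Qs n).filter fun q => q.2.2.2 < q.2.2.1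
def QD (n : ℕ) : Finset (ℕ × ℕ × ℕ × ℕ) := (Qs n).filter fun q => q.1 = q.2.1
def QE (n : ℕ) : Finset (ℕ × ℕ × ℕ × ℕ) := (Qs n).filter fun q => q.2.2.1 = q.2.2.2

lemma sum_lt_swap_a (n : ℕ) (g : ℕ → ℕ → ℕ → ℕ → ℂ) :
    ∑ q ∈ (Qs n).filter (fun q => q.1 < q.2.1), g q.1 q.2.1 q.2.2.1 q.2.2.2
      = ∑ q ∈ QA n, g q.2.1 q.1 q.2.2.2 q.2.2.1 := by
  refine Finset.sum_nbij' (fun q => (q.2.1, q.1, q.2.2.2, q.2.2.1))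
    (fun q => (q.2.1, q.1, q.2.2.2, q.2.2.1)) ?_ ?_ ?_ ?_ ?_
  · rintro ⟨a, b, x, y⟩ hq
    simp only [mem_filter, mem_Qs] at hq
    obtain ⟨⟨h, ha, hb, hx, hy⟩, hab⟩ := hq
    simp only [QA, mem_filter, mem_Qs]
    exact ⟨⟨by rw [Nat.add_comm]; exact h, hb, ha, hy, hx⟩, hab⟩
  · rintro ⟨a, b, x, y⟩ hq
    simp only [QA, mem_filter, mem_Qs] at hq
    obtain ⟨⟨h, ha, hb, hx, hy⟩, hab⟩ := hq
    simp only [mem_filter, mem_Qs]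
    exact ⟨⟨by rw [Nat.add_comm]; exact h, hb, ha, hy, hx⟩, hab⟩
  · rintro ⟨a, b, x, y⟩ _; rfl
  · rintro ⟨a, b, x, y⟩ _; rfl
  · rintro ⟨a, b, x, y⟩ _; rfl

lemma sum_lt_swap_x (n : ℕ) (g : ℕ → ℕ → ℕ → ℕ → ℂ) :
    ∑ q ∈ (Qs n).filter (fun q => q.2.2.1 < q.2.2.2), g q.1 q.2.1 q.2.2.1 q.2.2.2
      = ∑ q ∈ QX n, g q.2.1 q.1 q.2.2.2 q.2.2.1 := by
  refine Finset.sum_nbij' (fun q => (q.2.1, q.1, q.2.2.2, q.2.2.1))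
    (fun q => (q.2.1, q.1, q.2.2.2, q.2.2.1)) ?_ ?_ ?_ ?_ ?_
  · rintro ⟨a, b, x, y⟩ hq
    simp only [mem_filter, mem_Qs] at hq
    obtain ⟨⟨h, ha, hb, hx, hy⟩, hab⟩ := hq
    simp only [QX, mem_filter, mem_Qs]
    exact ⟨⟨by rw [Nat.add_comm]; exact h, hb, ha, hy, hx⟩, hab⟩
  · rintro ⟨a, b, x, y⟩ hq
    simp only [QX, mem_filter, mem_Qs] at hq
    obtain ⟨⟨h, ha, hb, hx, hy⟩, hab⟩ := hq
    simp only [mem_filter, mem_Qs]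
    exact ⟨⟨by rw [Nat.add_comm]; exact h, hb, ha, hy, hx⟩, hab⟩
  · rintro ⟨a, b, x, y⟩ _; rfl
  · rintro ⟨a, b, x, y⟩ _; rfl
  · rintro ⟨a, b, x, y⟩ _; rfl

lemma lemL (n : ℕ) (g : ℕ → ℕ → ℕ → ℕ → ℂ) :
    ∑ q ∈ QA n, g q.1 q.2.1 q.2.2.1 q.2.2.2
      = ∑ q ∈ QX n, g (q.1 + q.2.1) q.1 q.2.2.2 (q.2.2.1 - q.2.2.2) := by
  refine Finset.sum_nbij' (fun q => (q.2.1, q.1 - q.2.1, q.2.2.1 + q.2.2.2, q.2.2.1))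
    (fun q => (q.1 + q.2.1, q.1, q.2.2.2, q.2.2.1 - q.2.2.2)) ?_ ?_ ?_ ?_ ?_
  · rintro ⟨a, b, x, y⟩ hq
    simp only [QA, mem_filter, mem_Qs] at hq
    obtain ⟨⟨h, ha, hb, hx, hy⟩, hab⟩ := hq
    simp only [QX, mem_filter, mem_Qs]
    obtain ⟨k, rfl⟩ := Nat.exists_eq_add_of_lt hab
    have e1 : b + k + 1 - b = k + 1 := by omega
    refine ⟨⟨?_, hb, by omega, by omega, hx⟩, by omega⟩
    rw [e1, ← h]; ring
  · rintro ⟨a, b, x, y⟩ hq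
    simp only [QX, mem_filter, mem_Qs] at hq
    obtain ⟨⟨h, ha, hb, hx, hy⟩, hxy⟩ := hq
    simp only [QA, mem_filter, mem_Qs]
    obtain ⟨k, rfl⟩ := Nat.exists_eq_add_of_lt hxy
    have e1 : y + k + 1 - y = k + 1 := by omega
    refine ⟨⟨?_, by omega, ha, hy, by omega⟩, by omega⟩
    rw [e1, ← h]; ring
  · rintro ⟨a, b, x, y⟩ hq
    simp only [QA, mem_filter, mem_Qs] at hq
    obtain ⟨⟨h, ha, hb, hx, hy⟩, hab⟩ := hq
    simp only [Prod.mk.injEq, and_true, true_and, eq_self_iff_true]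
    omega
  · rintro ⟨a, b, x, y⟩ hq
    simp only [QX, mem_filter, mem_Qs] at hq
    obtain ⟨⟨h, ha, hb, hx, hy⟩, hxy⟩ := hq
    simp only [Prod.mk.injEq, and_true, true_and, eq_self_iff_true]
    omega
  · rintro ⟨a, b, x, y⟩ hq
    simp only [QA, mem_filter, mem_Qs] at hq
    obtain ⟨⟨h, ha, hb, hx, hy⟩, hab⟩ := hq
    have e1 : b + (a - b) = a := by omega
    have e2 : x + y - x = y := by omega
    rw [e1, e2]

lemma lemR (n : ℕ) (g : ℕ → ℕ → ℕ → ℕ → ℂ) :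
    ∑ q ∈ QX n, g q.1 q.2.1 q.2.2.1 q.2.2.2
      = ∑ q ∈ QA n, g q.2.1 (q.1 - q.2.1) (q.2.2.1 + q.2.2.2) q.2.2.1 := by
  rw [lemL n (fun a b x y => g b (a - b) (x + y) x)]
  refine Finset.sum_congr rfl ?_
  rintro ⟨a, b, x, y⟩ hq
  simp only [QX, mem_filter, mem_Qs] at hq
  obtain ⟨⟨h, ha, hb, hx, hy⟩, hxy⟩ := hq
  have e1 : a + b - a = b := by omega
  have e2 : y + (x - y) = x := by omega
  rw [e1, e2]

lemma diag_a (n : ℕ) (g : ℕ → ℕ → ℕ → ℕ → ℂ) :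
    ∑ q ∈ QD n, g q.1 q.2.1 q.2.2.1 q.2.2.2
      = ∑ p ∈ n.divisorsAntidiagonal, ∑ y ∈ Ico 1 p.2, g p.1 p.1 (p.2 - y) y := by
  rw [Finset.sum_sigma' n.divisorsAntidiagonal (fun p => Ico 1 p.2)
    (fun p y => g p.1 p.1 (p.2 - y) y)]
  refine (Finset.sum_nbij' (fun x => (x.1.1, x.1.1, x.1.2 - x.2, x.2))
    (fun q => ⟨(q.1, q.2.2.1 + q.2.2.2), q.2.2.2⟩) ?_ ?_ ?_ ?_ ?_).symm
  · rintro ⟨⟨d, e⟩, y⟩ hx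
    simp only [Finset.mem_sigma, Nat.mem_divisorsAntidiagonal, Finset.mem_Ico] at hx
    obtain ⟨⟨hde, hn⟩, h1y, hye⟩ := hx
    simp only [QD, mem_filter, mem_Qs]
    rcases Nat.eq_zero_or_pos d with rfl | hd
    · rw [zero_mul] at hde; exact absurd hde.symm hn
    refine ⟨⟨?_, hd, hd, by omega, by omega⟩, trivial⟩
    rw [← Nat.mul_add, Nat.sub_add_cancel (by omega)]
    exact hde
  · rintro ⟨a, b, x, y⟩ hq
    simp only [QD, mem_filter, mem_Qs] at hq
    obtain ⟨⟨h, ha, hb, hx, hy⟩, hab⟩ := hq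
    subst hab
    simp only [Finset.mem_sigma, Nat.mem_divisorsAntidiagonal, Finset.mem_Ico]
    have hpos : 0 < n := h ▸ Nat.add_pos_left (Nat.mul_pos ha hx) _
    refine ⟨⟨?_, hpos.ne'⟩, by omega, by omega⟩
    rw [Nat.mul_add]; exact h
  · rintro ⟨⟨d, e⟩, y⟩ hx
    simp only [Finset.mem_sigma, Nat.mem_divisorsAntidiagonal, Finset.mem_Ico] at hx
    obtain ⟨⟨hde, hn⟩, h1y, hye⟩ := hx
    have e1 : e - y + y = e := by omega
    simp only [e1]
  · rintro ⟨a, b, x, y⟩ hq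
    simp only [QD, mem_filter, mem_Qs] at hq
    obtain ⟨⟨h, ha, hb, hx, hy⟩, hab⟩ := hq
    subst hab
    have e1 : x + y - y = x := by omega
    simp only [Prod.mk.injEq, e1, and_true, true_and, eq_self_iff_true]
  · rintro ⟨⟨d, e⟩, y⟩ hx
    rfl

lemma diag_x (n : ℕ) (g : ℕ → ℕ → ℕ → ℕ → ℂ) :
    ∑ q ∈ QE n, g q.1 q.2.1 q.2.2.1 q.2.2.2
      = ∑ p ∈ n.divisorsAntidiagonal, ∑ b ∈ Ico 1 p.1, g (p.1 - b) b p.2 p.2 := by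
  rw [Finset.sum_sigma' n.divisorsAntidiagonal (fun p => Ico 1 p.1)
    (fun p b => g (p.1 - b) b p.2 p.2)]
  refine (Finset.sum_nbij' (fun x => (x.1.1 - x.2, x.2, x.1.2, x.1.2))
    (fun q => ⟨(q.1 + q.2.1, q.2.2.1), q.2.1⟩) ?_ ?_ ?_ ?_ ?_).symm
  · rintro ⟨⟨d, e⟩, b⟩ hx
    simp only [Finset.mem_sigma, Nat.mem_divisorsAntidiagonal, Finset.mem_Ico] at hx
    obtain ⟨⟨hde, hn⟩, h1b, hbd⟩ := hx
    simp only [QE, mem_filter, mem_Qs]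
    rcases Nat.eq_zero_or_pos e with rfl | he
    · rw [Nat.mul_zero] at hde; exact absurd hde.symm hn
    refine ⟨⟨?_, by omega, by omega, he, he⟩, trivial⟩
    rw [← Nat.add_mul, Nat.sub_add_cancel (by omega)]
    exact hde
  · rintro ⟨a, b, x, y⟩ hq
    simp only [QE, mem_filter, mem_Qs] at hq
    obtain ⟨⟨h, ha, hb, hx, hy⟩, hxy⟩ := hq
    subst hxy
    simp only [Finset.mem_sigma, Nat.mem_divisorsAntidiagonal, Finset.mem_Ico]
    have hpos : 0 < n := h ▸ Nat.add_pos_left (Nat.mul_pos ha hx) _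
    refine ⟨⟨?_, hpos.ne'⟩, by omega, by omega⟩
    rw [Nat.add_mul]; exact h
  · rintro ⟨⟨d, e⟩, b⟩ hx
    simp only [Finset.mem_sigma, Nat.mem_divisorsAntidiagonal, Finset.mem_Ico] at hx
    obtain ⟨⟨hde, hn⟩, h1b, hbd⟩ := hx
    have e1 : d - b + b = d := by omega
    simp only [e1]
  · rintro ⟨a, b, x, y⟩ hq
    simp only [QE, mem_filter, mem_Qs] at hq
    obtain ⟨⟨h, ha, hb, hx, hy⟩, hxy⟩ := hq
    subst hxy
    have e1 : a + b - b = a := by omega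
    simp only [Prod.mk.injEq, e1, and_true, true_and, eq_self_iff_true]
  · rintro ⟨⟨d, e⟩, b⟩ hx
    rfl

lemma split_a (n : ℕ) (g : ℕ → ℕ → ℕ → ℕ → ℂ) :
    ∑ q ∈ Qs n, g q.1 q.2.1 q.2.2.1 q.2.2.2
      = ∑ q ∈ QA n, g q.1 q.2.1 q.2.2.1 q.2.2.2
        + ∑ q ∈ QA n, g q.2.1 q.1 q.2.2.2 q.2.2.1
        + ∑ q ∈ QD n, g q.1 q.2.1 q.2.2.1 q.2.2.2 := by
  rw [← sum_lt_swap_a n g]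
  rw [← Finset.sum_filter_add_sum_filter_not (Qs n) (fun q => q.2.1 < q.1)
      (fun q => g q.1 q.2.1 q.2.2.1 q.2.2.2),
    ← Finset.sum_filter_add_sum_filter_not ((Qs n).filter (fun q => ¬ q.2.1 < q.1))
      (fun q => q.1 < q.2.1) (fun q => g q.1 q.2.1 q.2.2.1 q.2.2.2),
    Finset.filter_filter, Finset.filter_filter]
  have e1 : (Qs n).filter (fun q => ¬ q.2.1 < q.1 ∧ q.1 < q.2.1)
      = (Qs n).filter (fun q => q.1 < q.2.1) :=
    Finset.filter_congr (fun q _ => by omega)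
  have e2 : (Qs n).filter (fun q => ¬ q.2.1 < q.1 ∧ ¬ q.1 < q.2.1)
      = QD n :=
    Finset.filter_congr (fun q _ => by omega)
  rw [e1, e2, QA]
  ring

lemma split_x (n : ℕ) (g : ℕ → ℕ → ℕ → ℕ → ℂ) :
    ∑ q ∈ Qs n, g q.1 q.2.1 q.2.2.1 q.2.2.2
      = ∑ q ∈ QX n, g q.1 q.2.1 q.2.2.1 q.2.2.2
        + ∑ q ∈ QX n, g q.2.1 q.1 q.2.2.2 q.2.2.1
        + ∑ q ∈ QE n, g q.1 q.2.1 q.2.2.1 q.2.2.2 := by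
  rw [← sum_lt_swap_x n g]
  rw [← Finset.sum_filter_add_sum_filter_not (Qs n) (fun q => q.2.2.2 < q.2.2.1)
      (fun q => g q.1 q.2.1 q.2.2.1 q.2.2.2),
    ← Finset.sum_filter_add_sum_filter_not ((Qs n).filter (fun q => ¬ q.2.2.2 < q.2.2.1))
      (fun q => q.2.2.1 < q.2.2.2) (fun q => g q.1 q.2.1 q.2.2.1 q.2.2.2),
    Finset.filter_filter, Finset.filter_filter]
  have e1 : (Qs n).filter (fun q => ¬ q.2.2.2 < q.2.2.1 ∧ q.2.2.1 < q.2.2.2)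
      = (Qs n).filter (fun q => q.2.2.1 < q.2.2.2) :=
    Finset.filter_congr (fun q _ => by omega)
  have e2 : (Qs n).filter (fun q => ¬ q.2.2.2 < q.2.2.1 ∧ ¬ q.2.2.1 < q.2.2.2)
      = QE n :=
    Finset.filter_congr (fun q _ => by omega)
  rw [e1, e2, QX]
  ring

noncomputable section

def Tf (a b x y : ℕ) : ℂ :=
  1728 * (a:ℂ) * b * x^2 * y^2 - 1152 * (b:ℂ)^2 * x * y^3

def P1f (a b x y : ℕ) : ℂ :=
  96 * (b:ℂ)^2 * y^4 - 576 * (b:ℂ)^2 * x * y^3 + 576 * (b:ℂ)^2 * x^2 * y^2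
    - 768 * (a:ℂ) * b * x * y^3 + 864 * (a:ℂ) * b * x^2 * y^2

def Vf (a b x y : ℕ) : ℂ := P1f a b x y + P1f b a y x

def P3f (a b x y : ℕ) : ℂ :=
  -96 * (b:ℂ)^2 * y^4 - 576 * (b:ℂ)^2 * x * y^3 + 192 * (b:ℂ)^2 * x^3 * y
    - 96 * (b:ℂ)^2 * x^4 + 768 * (a:ℂ) * b * x * y^3 + 576 * (a:ℂ) * b * x^2 * y^2

def P4f (a b x y : ℕ) : ℂ :=
  96 * (b:ℂ)^2 * y^4 - 576 * (b:ℂ)^2 * x * y^3 + 576 * (b:ℂ)^2 * x^2 * y^2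
    - 192 * (a:ℂ) * b * y^4 + 384 * (a:ℂ) * b * x * y^3

lemma sum_Ico_poly (A0 A1 A2 A3 A4 : ℂ) :
    ∀ e : ℕ, 1 ≤ e →
      (∑ y ∈ Ico 1 e, (A0 + A1 * y + A2 * (y:ℂ)^2 + A3 * (y:ℂ)^3 + A4 * (y:ℂ)^4))
        = A0 * ((e:ℂ) - 1) + A1 * ((e:ℂ)^2/2 - (e:ℂ)/2)
          + A2 * ((e:ℂ)^3/3 - (e:ℂ)^2/2 + (e:ℂ)/6)
          + A3 * ((e:ℂ)^4/4 - (e:ℂ)^3/2 + (e:ℂ)^2/4)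
          + A4 * ((e:ℂ)^5/5 - (e:ℂ)^4/2 + (e:ℂ)^3/3 - (e:ℂ)/30) := by
  intro e he
  induction e, he using Nat.le_induction with
  | base => simp; norm_num
  | succ e he ih =>
    rw [Finset.sum_Ico_succ_top (by omega), ih]
    push_cast
    ring

lemma perpair (d e : ℕ) (hd : 1 ≤ d) (he : 1 ≤ e) :
    2 * (∑ y ∈ Ico 1 e, Tf d d (e - y) y)
      - (∑ y ∈ Ico 1 e, Vf d d (e - y) y)
      + (∑ b ∈ Ico 1 d, Vf (d - b) b e e)
      = 96 * (d:ℂ)^2 * (e:ℂ)^3 * ((d:ℂ) * e - 1) := by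
  have hT : (∑ y ∈ Ico 1 e, Tf d d (e - y) y)
      = ∑ y ∈ Ico 1 e, ((0:ℂ) + 0 * y + (1728*(d:ℂ)^2*(e:ℂ)^2) * (y:ℂ)^2
          + (-4608*(d:ℂ)^2*(e:ℂ)) * (y:ℂ)^3 + (2880*(d:ℂ)^2) * (y:ℂ)^4) := by
    refine Finset.sum_congr rfl fun y hy => ?_
    rw [mem_Ico] at hy
    simp only [Tf]
    rw [Nat.cast_sub (by omega : y ≤ e)]
    ring
  have hV : (∑ y ∈ Ico 1 e, Vf d d (e - y) y)
      = ∑ y ∈ Ico 1 e, ((96*(d:ℂ)^2*(e:ℂ)^4) + (-1728*(d:ℂ)^2*(e:ℂ)^3) * y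
          + (7488*(d:ℂ)^2*(e:ℂ)^2) * (y:ℂ)^2
          + (-11520*(d:ℂ)^2*(e:ℂ)) * (y:ℂ)^3 + (5760*(d:ℂ)^2) * (y:ℂ)^4) := by
    refine Finset.sum_congr rfl fun y hy => ?_
    rw [mem_Ico] at hy
    simp only [Vf, P1f]
    rw [Nat.cast_sub (by omega : y ≤ e)]
    ring
  have hVx : (∑ b ∈ Ico 1 d, Vf (d - b) b e e)
      = ∑ b ∈ Ico 1 d, ((96*(d:ℂ)^2*(e:ℂ)^4) + 0 * b + 0 * (b:ℂ)^2
          + 0 * (b:ℂ)^3 + 0 * (b:ℂ)^4) := by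
    refine Finset.sum_congr rfl fun b hb => ?_
    rw [mem_Ico] at hb
    simp only [Vf, P1f]
    rw [Nat.cast_sub (by omega : b ≤ d)]
    ring
  rw [hT, hV, hVx, sum_Ico_poly _ _ _ _ _ e he, sum_Ico_poly _ _ _ _ _ e he,
    sum_Ico_poly _ _ _ _ _ d hd]
  ring

theorem master (n : ℕ) :
    ∑ q ∈ Qs n, Tf q.1 q.2.1 q.2.2.1 q.2.2.2
      = ∑ p ∈ n.divisorsAntidiagonal, 48 * (p.1:ℂ)^2 * (p.2:ℂ)^3 * ((p.1:ℂ) * p.2 - 1) := by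
  have E1 := split_a n Tf
  have E2 : ∑ q ∈ QA n, (Tf q.1 q.2.1 q.2.2.1 q.2.2.2 + Tf q.2.1 q.1 q.2.2.2 q.2.2.1
        + P4f q.2.1 (q.1 - q.2.1) (q.2.2.1 + q.2.2.2) q.2.2.1)
      = ∑ q ∈ QA n, (Vf q.1 q.2.1 q.2.2.1 q.2.2.2 + P3f q.1 q.2.1 q.2.2.1 q.2.2.2) := by
    refine Finset.sum_congr rfl ?_
    rintro ⟨a, b, x, y⟩ hq
    simp only [QA, mem_filter, mem_Qs] at hq
    obtain ⟨⟨h, ha, hb, hx, hy⟩, hab⟩ := hq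
    simp only [Tf, Vf, P1f, P3f, P4f]
    rw [Nat.cast_sub hab.le]
    push_cast
    ring
  have E3 := lemL n P3f
  have E4 := lemR n P4f
  have E5 : ∑ q ∈ QX n, (P3f (q.1 + q.2.1) q.1 q.2.2.2 (q.2.2.1 - q.2.2.2)
        + Vf q.1 q.2.1 q.2.2.1 q.2.2.2)
      = ∑ q ∈ QX n, P4f q.1 q.2.1 q.2.2.1 q.2.2.2 := by
    refine Finset.sum_congr rfl ?_
    rintro ⟨a, b, x, y⟩ hq
    simp only [QX, mem_filter, mem_Qs] at hq
    obtain ⟨⟨h, ha, hb, hx, hy⟩, hxy⟩ := hq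
    simp only [Vf, P1f, P3f, P4f]
    rw [Nat.cast_sub hxy.le]
    push_cast
    ring
  have E6 := split_a n Vf
  have E6b : ∑ q ∈ QA n, Vf q.2.1 q.1 q.2.2.2 q.2.2.1
      = ∑ q ∈ QA n, Vf q.1 q.2.1 q.2.2.1 q.2.2.2 :=
    Finset.sum_congr rfl fun q _ => by simp only [Vf, P1f]; ring
  have E7 := split_x n Vf
  have E7b : ∑ q ∈ QX n, Vf q.2.1 q.1 q.2.2.2 q.2.2.1
      = ∑ q ∈ QX n, Vf q.1 q.2.1 q.2.2.1 q.2.2.2 :=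
    Finset.sum_congr rfl fun q _ => by simp only [Vf, P1f]; ring
  simp only [Finset.sum_add_distrib] at E2 E5
  have key : 2 * (∑ q ∈ Qs n, Tf q.1 q.2.1 q.2.2.1 q.2.2.2)
      = 2 * (∑ q ∈ QD n, Tf q.1 q.2.1 q.2.2.1 q.2.2.2)
        - (∑ q ∈ QD n, Vf q.1 q.2.1 q.2.2.1 q.2.2.2)
        + (∑ q ∈ QE n, Vf q.1 q.2.1 q.2.2.1 q.2.2.2) := by
    linear_combination 2*E1 + 2*E2 + 2*E3 + 2*E4 + 2*E5 - E6 - E6b + E7 + E7b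
  have key2 : 2 * (∑ q ∈ QD n, Tf q.1 q.2.1 q.2.2.1 q.2.2.2)
        - (∑ q ∈ QD n, Vf q.1 q.2.1 q.2.2.1 q.2.2.2)
        + (∑ q ∈ QE n, Vf q.1 q.2.1 q.2.2.1 q.2.2.2)
      = 2 * ∑ p ∈ n.divisorsAntidiagonal,
          48 * (p.1:ℂ)^2 * (p.2:ℂ)^3 * ((p.1:ℂ) * p.2 - 1) := by
    rw [diag_a n Tf, diag_a n Vf, diag_x n Vf, Finset.mul_sum, Finset.mul_sum,
      ← Finset.sum_sub_distrib, ← Finset.sum_add_distrib]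
    refine Finset.sum_congr rfl ?_
    rintro ⟨d, e⟩ hp
    rw [Nat.mem_divisorsAntidiagonal] at hp
    obtain ⟨hde, hn⟩ := hp
    have hd : 1 ≤ d := by
      rcases Nat.eq_zero_or_pos d with rfl | h; · rw [zero_mul] at hde; exact absurd hde.symm hn
      exact h
    have he : 1 ≤ e := by
      rcases Nat.eq_zero_or_pos e with rfl | h; · rw [Nat.mul_zero] at hde; exact absurd hde.symm hn
      exact h
    rw [perpair d e hd he]
    ring
  have := key.trans key2
  exact mul_left_cancel₀ two_ne_zero this


/-- σ₁ as a complex number, via the divisors antidiagonal. -/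
def sigC (k : ℕ) : ℂ := ∑ p ∈ k.divisorsAntidiagonal, (p.2 : ℂ)

def sE (k : ℕ) : ℂ := -24 * sigC k

def Es : PowerSeries ℂ := PowerSeries.mk sE

lemma coeff_theta (n : ℕ) (f : PowerSeries ℂ) :
    coeff n (theta f) = (n : ℂ) * coeff n f := coeff_mk _ _

lemma theta_one_add (f : PowerSeries ℂ) : theta (1 + f) = theta f := by
  ext n
  simp only [theta, coeff_mk, map_add, PowerSeries.coeff_one]
  rcases n with _ | n
  · simp
  · simp

lemma E2_eq : E2 = 1 + Es := by
  ext k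
  rw [map_add, E2, Es, coeff_mk, coeff_mk, PowerSeries.coeff_one]
  rcases k with _ | k
  · simp [sE, sigC]
  · have : sigC (k+1) = ∑ d ∈ (k+1).divisors, (d : ℂ) :=
      Nat.sum_divisorsAntidiagonal' (fun _ j => (j : ℂ))
    simp [sE, this]

/-- Flattening a double divisor sum over an antidiagonal into the quadruple set. -/
lemma flatten (n : ℕ) (F : ℕ → ℕ → ℕ → ℕ → ℂ) :
    ∑ p ∈ antidiagonal n, ∑ u ∈ p.1.divisorsAntidiagonal,
        ∑ v ∈ p.2.divisorsAntidiagonal, F u.1 v.1 u.2 v.2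
      = ∑ q ∈ Qs n, F q.1 q.2.1 q.2.2.1 q.2.2.2 := by
  have step : ∀ p : ℕ × ℕ, ∑ u ∈ p.1.divisorsAntidiagonal,
      ∑ v ∈ p.2.divisorsAntidiagonal, F u.1 v.1 u.2 v.2
      = ∑ w ∈ p.1.divisorsAntidiagonal ×ˢ p.2.divisorsAntidiagonal,
          F w.1.1 w.2.1 w.1.2 w.2.2 := by
    intro p
    rw [Finset.sum_product]
  simp only [step]
  rw [Finset.sum_sigma' (antidiagonal n)
    (fun p => p.1.divisorsAntidiagonal ×ˢ p.2.divisorsAntidiagonal)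
    (fun p w => F w.1.1 w.2.1 w.1.2 w.2.2)]
  refine Finset.sum_nbij' (fun z => (z.2.1.1, z.2.2.1, z.2.1.2, z.2.2.2))
    (fun q => ⟨(q.1 * q.2.2.1, q.2.1 * q.2.2.2), ((q.1, q.2.2.1), (q.2.1, q.2.2.2))⟩)
    ?_ ?_ ?_ ?_ ?_
  · rintro ⟨⟨i, j⟩, ⟨⟨a, x⟩, ⟨b, y⟩⟩⟩ hz
    simp only [Finset.mem_sigma, Finset.mem_product, Finset.mem_antidiagonal,
      Nat.mem_divisorsAntidiagonal] at hz
    obtain ⟨hij, ⟨hax, hi0⟩, ⟨hby, hj0⟩⟩ := hz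
    simp only [mem_Qs]
    refine ⟨by rw [hax, hby]; exact Finset.HasAntidiagonal.mem_antidiagonal.mp hij, ?_, ?_, ?_, ?_⟩
    · rcases Nat.eq_zero_or_pos a with rfl | h
      · rw [zero_mul] at hax; exact absurd hax.symm hi0
      · exact h
    · rcases Nat.eq_zero_or_pos b with rfl | h
      · rw [zero_mul] at hby; exact absurd hby.symm hj0
      · exact h
    · rcases Nat.eq_zero_or_pos x with rfl | h
      · rw [Nat.mul_zero] at hax; exact absurd hax.symm hi0
      · exact h
    · rcases Nat.eq_zero_or_pos y with rfl | h
      · rw [Nat.mul_zero] at hby; exact absurd hby.symm hj0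
      · exact h
  · rintro ⟨a, b, x, y⟩ hq
    simp only [mem_Qs] at hq
    obtain ⟨h, ha, hb, hx, hy⟩ := hq
    simp only [Finset.mem_sigma, Finset.mem_product, Finset.mem_antidiagonal,
      Nat.mem_divisorsAntidiagonal]
    exact ⟨Finset.HasAntidiagonal.mem_antidiagonal.mpr h, ⟨trivial, (Nat.mul_pos ha hx).ne'⟩, ⟨trivial, (Nat.mul_pos hb hy).ne'⟩⟩
  · rintro ⟨⟨i, j⟩, ⟨⟨a, x⟩, ⟨b, y⟩⟩⟩ hz
    simp only [Finset.mem_sigma, Finset.mem_product, Finset.mem_antidiagonal,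
      Nat.mem_divisorsAntidiagonal] at hz
    obtain ⟨hij, ⟨hax, hi0⟩, ⟨hby, hj0⟩⟩ := hz
    dsimp only
    rw [hax, hby]
  · rintro ⟨a, b, x, y⟩ _
    rfl
  · rintro ⟨⟨i, j⟩, ⟨⟨a, x⟩, ⟨b, y⟩⟩⟩ _
    rfl

def FA (a b x y : ℕ) : ℂ := 576 * (x:ℂ) * ((b:ℂ) * y)^2 * y
def FB (a b x y : ℕ) : ℂ := 576 * ((a:ℂ) * x) * ((b:ℂ) * y) * ((x:ℂ) * y)

lemma hA (n : ℕ) :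
    ∑ p ∈ antidiagonal n, sE p.1 * ((p.2:ℂ) * ((p.2:ℂ) * sE p.2))
      = ∑ q ∈ Qs n, FA q.1 q.2.1 q.2.2.1 q.2.2.2 := by
  rw [← flatten n FA]
  refine Finset.sum_congr rfl fun p _ => ?_
  symm
  have h1 : ∀ u ∈ p.1.divisorsAntidiagonal, ∀ v ∈ p.2.divisorsAntidiagonal,
      FA u.1 v.1 u.2 v.2 = (576 * (p.2:ℂ)^2) * ((u.2:ℂ) * (v.2:ℂ)) := by
    intro u hu v hv
    rw [Nat.mem_divisorsAntidiagonal] at hv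
    have : ((v.1 : ℂ) * v.2) = (p.2 : ℂ) := by exact_mod_cast congrArg Nat.cast hv.1
    rw [FA, mul_comm (v.1:ℂ) (v.2:ℂ)] at *
    rw [← this]
    ring
  calc ∑ u ∈ p.1.divisorsAntidiagonal, ∑ v ∈ p.2.divisorsAntidiagonal,
        FA u.1 v.1 u.2 v.2
      = ∑ u ∈ p.1.divisorsAntidiagonal, ∑ v ∈ p.2.divisorsAntidiagonal,
        (576 * (p.2:ℂ)^2) * ((u.2:ℂ) * (v.2:ℂ)) := by
        refine Finset.sum_congr rfl fun u hu => Finset.sum_congr rfl fun v hv => h1 u hu v hv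
    _ = (576 * (p.2:ℂ)^2) * (sigC p.1 * sigC p.2) := by
        rw [sigC, sigC, Finset.sum_mul_sum]
        simp only [Finset.mul_sum]
    _ = sE p.1 * ((p.2:ℂ) * ((p.2:ℂ) * sE p.2)) := by
        rw [sE, sE]; ring

lemma hB (n : ℕ) :
    ∑ p ∈ antidiagonal n, ((p.1:ℂ) * sE p.1) * ((p.2:ℂ) * sE p.2)
      = ∑ q ∈ Qs n, FB q.1 q.2.1 q.2.2.1 q.2.2.2 := by
  rw [← flatten n FB]
  refine Finset.sum_congr rfl fun p _ => ?_
  symm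
  have h1 : ∀ u ∈ p.1.divisorsAntidiagonal, ∀ v ∈ p.2.divisorsAntidiagonal,
      FB u.1 v.1 u.2 v.2 = (576 * (p.1:ℂ) * (p.2:ℂ)) * ((u.2:ℂ) * (v.2:ℂ)) := by
    intro u hu v hv
    rw [Nat.mem_divisorsAntidiagonal] at hu hv
    have e1 : ((u.1 : ℂ) * u.2) = (p.1 : ℂ) := by exact_mod_cast congrArg Nat.cast hu.1
    have e2 : ((v.1 : ℂ) * v.2) = (p.2 : ℂ) := by exact_mod_cast congrArg Nat.cast hv.1
    rw [FB, ← e1, ← e2]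
    try ring
  calc ∑ u ∈ p.1.divisorsAntidiagonal, ∑ v ∈ p.2.divisorsAntidiagonal,
        FB u.1 v.1 u.2 v.2
      = ∑ u ∈ p.1.divisorsAntidiagonal, ∑ v ∈ p.2.divisorsAntidiagonal,
        (576 * (p.1:ℂ) * (p.2:ℂ)) * ((u.2:ℂ) * (v.2:ℂ)) := by
        refine Finset.sum_congr rfl fun u hu => Finset.sum_congr rfl fun v hv => h1 u hu v hv
    _ = (576 * (p.1:ℂ) * (p.2:ℂ)) * (sigC p.1 * sigC p.2) := by
        rw [sigC, sigC, Finset.sum_mul_sum]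
        simp only [Finset.mul_sum]
    _ = ((p.1:ℂ) * sE p.1) * ((p.2:ℂ) * sE p.2) := by
        rw [sE, sE]; ring

/-- **`E₂` satisfies the Chazy equation** `2θ³E₂ − 2E₂·θ²E₂ + 3(θE₂)² = 0`
with `θ = q·d/dq`. -/
theorem E2_satisfies_chazy :
    2 * theta (theta (theta E2)) - 2 * E2 * theta (theta E2)
      + 3 * (theta E2) ^ 2 = 0 := by
  rw [E2_eq, theta_one_add]
  have expand : 2 * theta (theta (theta Es)) - 2 * (1 + Es) * theta (theta Es)
        + 3 * (theta Es) ^ 2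
      = C 2 * theta (theta (theta Es)) - C 2 * theta (theta Es)
        - C 2 * (Es * theta (theta Es)) + C 3 * (theta Es * theta Es) := by
    rw [← map_ofNat (C (R := ℂ)) 2, ← map_ofNat (C (R := ℂ)) 3]
    ring
  rw [expand]
  ext n
  rw [map_add, map_sub, map_sub, map_zero, coeff_C_mul, coeff_C_mul, coeff_C_mul,
    coeff_C_mul, PowerSeries.coeff_mul, PowerSeries.coeff_mul]
  simp only [theta, coeff_mk, Es]
  have R1 := hA n
  have R2 := hB n
  have R3 := master n
  have R4 : ∑ q ∈ Qs n, Tf q.1 q.2.1 q.2.2.1 q.2.2.2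
      = 3 * (∑ q ∈ Qs n, FB q.1 q.2.1 q.2.2.1 q.2.2.2)
        - 2 * (∑ q ∈ Qs n, FA q.1 q.2.1 q.2.2.1 q.2.2.2) := by
    rw [Finset.mul_sum, Finset.mul_sum, ← Finset.sum_sub_distrib]
    refine Finset.sum_congr rfl fun q _ => ?_
    rw [Tf, FA, FB]; ring
  have R5 : ∑ p ∈ n.divisorsAntidiagonal, 48 * (p.1:ℂ)^2 * (p.2:ℂ)^3 * ((p.1:ℂ) * p.2 - 1)
      = (48 * (n:ℂ)^3 - 48 * (n:ℂ)^2) * sigC n := by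
    rw [sigC, Finset.mul_sum]
    refine Finset.sum_congr rfl fun p hp => ?_
    rw [Nat.mem_divisorsAntidiagonal] at hp
    have e1 : ((p.1 : ℂ) * p.2) = (n : ℂ) := by exact_mod_cast congrArg Nat.cast hp.1
    rw [← e1]; ring
  have R6 : sE n = -24 * sigC n := rfl
  linear_combination (-2 : ℂ) * R1 + 3 * R2 + R3 - R4 + R5
    + (2 * (n:ℂ)^3 - 2 * (n:ℂ)^2) * R6


end
end
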